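/- Let X be a finite non-empty set with an imprecise probability tree and associated game-theoretic upper expectation Ē_V. Then for any f : Ω → ℝ̄ and any situation x_{1:n} ∈ X*, the law of iterated upper expectations holds: Ē_V(f | x_{1:n}) = Ē_V( Ē_V(f | x_{1:n} X_{n+1}) | x_{1:n} ), where Ē_V(f | x_{1:n} X_{n+1}) denotes the (n+1)-measurable global variable whose value on any path through x_{1:n} x_{n+1} is Ē_V(f | x_{1:n} x_{n+1}). -/

import Mathlib

open Filter Topology

/-- A function to the extended reals is bounded below by some real number. -/
def BddBelowF {Y : Type*} (f : Y → EReal) : Prop :=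
  ∃ M : ℝ, ∀ y, (M : EReal) ≤ f y

/-- An upper expectation on the bounded-below extended-real functions on `Y`:
axioms E1 (constants), E2 (subadditivity), E3 (positive/`+∞` homogeneity on
non-negative functions) and E4 (monotonicity). -/
structure IsUpperExpectation {Y : Type*} (E : (Y → EReal) → EReal) : Prop where
  const : ∀ c : ℝ, E (fun _ => (c : EReal)) = (c : EReal)
  subadd : ∀ f g : Y → EReal, BddBelowF f → BddBelowF g →
    E (fun y => f y + g y) ≤ E f + E g
  homog : ∀ lam : EReal, 0 < lam → ∀ f : Y → EReal, BddBelowF f → (∀ y, 0 ≤ f y) →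
    E (fun y => lam * f y) = lam * E f
  mono : ∀ f g : Y → EReal, BddBelowF f → BddBelowF g → (∀ y, f y ≤ g y) → E f ≤ E g

/-- The initial segment `ω^n = (ω_1, …, ω_n)` of a path `ω ∈ X^ℕ`. -/
def seg {X : Type*} (ω : ℕ → X) (n : ℕ) : List X :=
  List.ofFn (fun i : Fin n => ω i)

/-- The cylinder event `Γ(s)` of all paths going through the situation `s`. -/
def cyl {X : Type*} (s : List X) : Set (ℕ → X) :=
  {ω | seg ω s.length = s}

/-- A global variable is `n`-measurable if it only depends on the first `n` states. -/
def NMeas {X α : Type*} (n : ℕ) (f : (ℕ → X) → α) : Prop :=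
  ∀ ω ω' : ℕ → X, seg ω n = seg ω' n → f ω = f ω'

/-- A supermartingale for an imprecise probability tree `Q`: a bounded-below
extended-real process `M` on situations such that `Q_s(M(s·)) ≤ M(s)` everywhere. -/
def IsSupermartingale {X : Type*} (Q : List X → (X → EReal) → EReal)
    (M : List X → EReal) : Prop :=
  (∃ B : ℝ, ∀ s, (B : EReal) ≤ M s) ∧ ∀ s, Q s (fun x => M (s ++ [x])) ≤ M s

/-- The game-theoretic upper expectation `Ē_V(f | s)`. -/
noncomputable def gUE {X : Type*} (Q : List X → (X → EReal) → EReal)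
    (f : (ℕ → X) → EReal) (s : List X) : EReal :=
  sInf { y | ∃ M : List X → EReal, IsSupermartingale Q M ∧
    (∀ ω ∈ cyl s, f ω ≤ Filter.liminf (fun n => M (seg ω n)) Filter.atTop) ∧ M s = y }

section Aux

variable {X : Type*}

lemma seg_length (ω : ℕ → X) (n : ℕ) : (seg ω n).length = n := by simp [seg]

lemma seg_succ (ω : ℕ → X) (n : ℕ) : seg ω (n + 1) = seg ω n ++ [ω n] := by
  rw [seg, List.ofFn_succ', List.concat_eq_append]
  rfl

lemma seg_take (ω : ℕ → X) {m n : ℕ} (h : m ≤ n) : (seg ω n).take m = seg ω m := by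
  apply List.ext_getElem
  · simp [seg, h]
  · intro i h1 h2
    simp [seg, List.getElem_take]

lemma seg_prefix (ω : ℕ → X) {m n : ℕ} (h : m ≤ n) : seg ω m <+: seg ω n := by
  rw [← seg_take ω h]; exact List.take_prefix _ _

lemma seg_getElem? (ω : ℕ → X) {n i : ℕ} (h : i < n) : (seg ω n)[i]? = some (ω i) := by
  simp [seg, List.getElem?_ofFn, h]

lemma seg_getD [Nonempty X] (ω : ℕ → X) {n i : ℕ} (h : i < n) (d : X) :
    (seg ω n).getD i d = ω i := by
  simp [List.getD, seg_getElem? ω h]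

lemma getD_append_lt (l m : List X) (n : ℕ) (h : n < l.length) (d : X) :
    (l ++ m).getD n d = l.getD n d := by
  simp [List.getD, List.getElem?_append_left h]

lemma getD_concat_length (l : List X) (a d : X) : (l ++ [a]).getD l.length d = a := by
  simp [List.getD]

lemma cyl_succ_subset {s : List X} {x : X} : cyl (s ++ [x]) ⊆ cyl s := by
  intro ω hω
  have hω' : seg ω (s.length + 1) = s ++ [x] := by
    have := hω
    simpa [cyl] using this
  show seg ω s.length = s
  have h1 : (seg ω (s.length + 1)).take s.length = seg ω s.length :=
    seg_take ω (Nat.le_succ _)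
  rw [← h1, hω', List.take_append_of_le_length le_rfl, List.take_length]

lemma seg_of_mem_cyl {s : List X} {ω : ℕ → X} (hω : ω ∈ cyl s) :
    seg ω (s.length + 1) = s ++ [ω s.length] := by
  rw [seg_succ]
  exact congrArg (· ++ [ω s.length]) hω

/-- Key supermartingale lemma: if a supermartingale tends (in liminf) to at least `c`
along every path through `t`, then its value at `t` is at least `c`. -/
lemma mart_ge {X : Type*} [Nonempty X] (Q : List X → (X → EReal) → EReal)
    (hQ : ∀ s, IsUpperExpectation (Q s)) (N : List X → EReal) (hN : IsSupermartingale Q N)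
    (t : List X) (c : ℝ)
    (hc : ∀ ω ∈ cyl t, (c : EReal) ≤ Filter.liminf (fun n => N (seg ω n)) Filter.atTop) :
    (c : EReal) ≤ N t := by
  classical
  by_contra hlt
  push_neg at hlt
  obtain ⟨⟨B, hB⟩, hsup⟩ := hN
  have hbot : N t ≠ ⊥ := by
    intro h
    have := hB t
    simp [h] at this
  have htop : N t ≠ ⊤ := by
    intro h
    rw [h] at hlt
    exact absurd hlt (by simp)
  set r := (N t).toReal with hrdef
  have hr : N t = (r : EReal) := (EReal.coe_toReal htop hbot).symm
  have hrc : r < c := by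
    rw [hr] at hlt
    exact_mod_cast hlt
  set c₀ : ℝ := (r + c) / 2 with hc₀
  have h1 : N t < (c₀ : EReal) := by
    rw [hr]
    exact_mod_cast (by linarith : r < c₀)
  have h2 : c₀ < c := by linarith
  have step : ∀ u : List X, N u < (c₀ : EReal) → ∃ x : X, N (u ++ [x]) < (c₀ : EReal) := by
    intro u hu
    by_contra hcon
    push_neg at hcon
    have hle : (c₀ : EReal) ≤ N u := by
      calc (c₀ : EReal) = Q u (fun _ => (c₀ : EReal)) := ((hQ u).const c₀).symm
        _ ≤ Q u (fun x => N (u ++ [x])) :=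
            (hQ u).mono _ _ ⟨c₀, fun _ => le_rfl⟩ ⟨B, fun x => hB _⟩ (fun x => hcon x)
        _ ≤ N u := hsup u
    exact absurd hu (not_lt.mpr hle)
  choose! pick hpick using step
  let u : ℕ → List X := fun k => Nat.rec t (fun _ v => v ++ [pick v]) k
  have husucc : ∀ k, u (k + 1) = u k ++ [pick (u k)] := fun _ => rfl
  have hulen : ∀ k, (u k).length = t.length + k := by
    intro k
    induction k with
    | zero => rfl
    | succ k ih => rw [husucc, List.length_append, ih]; simp [Nat.add_assoc]
  have hult : ∀ k, N (u k) < (c₀ : EReal) := by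
    intro k
    induction k with
    | zero => exact h1
    | succ k ih => rw [husucc]; exact hpick (u k) ih
  have hpre : ∀ j k, j ≤ k → u j <+: u k := by
    intro j k hjk
    induction k, hjk using Nat.le_induction with
    | base => exact List.prefix_refl _
    | succ k hk ih => exact ih.trans (by rw [husucc]; exact List.prefix_append _ _)
  let d : X := Classical.arbitrary X
  let ω : ℕ → X := fun n => (u (n + 1)).getD n d
  have hωget : ∀ k n, n < t.length + k → (u k)[n]? = some (ω n) := by
    intro k n hn
    have hn1 : n < (u (n + 1)).length := by have := hulen (n + 1); omega
    have hne : (u (n + 1))[n]? = some (ω n) := by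
      show _ = some ((u (n + 1)).getD n d)
      rw [List.getD_eq_getElem?_getD, List.getElem?_eq_getElem hn1]
      rfl
    rcases le_total k (n + 1) with h | h
    · obtain ⟨rest, hrest⟩ := hpre k (n + 1) h
      have hnk : n < (u k).length := by have := hulen k; omega
      rw [← hne, ← hrest, List.getElem?_append_left hnk]
    · obtain ⟨rest, hrest⟩ := hpre (n + 1) k h
      rw [← hrest, List.getElem?_append_left hn1, hne]
  have hseg : ∀ k, seg ω (t.length + k) = u k := by
    intro k
    apply List.ext_getElem?
    intro n
    by_cases hn : n < t.length + k
    · rw [seg_getElem? ω hn, hωget k n hn]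
    · rw [List.getElem?_eq_none (by have := seg_length ω (t.length + k); omega),
        List.getElem?_eq_none (by have := hulen k; omega)]
  have hωcyl : ω ∈ cyl t := by
    show seg ω t.length = t
    exact hseg 0
  have hev : ∀ᶠ n in atTop, N (seg ω n) ≤ (c₀ : EReal) := by
    filter_upwards [eventually_ge_atTop t.length] with n hn
    have hn' : seg ω n = u (n - t.length) := by
      rw [← hseg (n - t.length)]
      congr 1
      omega
    rw [hn']
    exact le_of_lt (hult _)
  have hlim : Filter.liminf (fun n => N (seg ω n)) Filter.atTop ≤ (c₀ : EReal) :=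
    liminf_le_of_frequently_le hev.frequently
  have := le_trans (hc ω hωcyl) hlim
  exact absurd this (not_le.mpr (by exact_mod_cast h2))

end Aux
/-- Theorem 1: the law of iterated upper expectations for the game-theoretic
upper expectation: `Ē_V(f | x_{1:n}) = Ē_V(Ē_V(f | x_{1:n} X_{n+1}) | x_{1:n})`. -/
theorem stmt13 {X : Type*} [Fintype X] [Nonempty X]
    (Q : List X → (X → EReal) → EReal) (hQ : ∀ s, IsUpperExpectation (Q s))
    (f : (ℕ → X) → EReal) (s : List X) :
    gUE Q f s = gUE Q (fun ω => gUE Q f (seg ω (s.length + 1))) s := by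
  classical
  apply le_antisymm
  · -- `gUE Q f s ≤ gUE Q g s`
    by_contra hcon
    push_neg at hcon
    obtain ⟨b, hb1, hb2⟩ := EReal.exists_between_coe_real hcon
    obtain ⟨y, ⟨N, hN, hNdom, hNs⟩, hyb⟩ := sInf_lt_iff.mp hb1
    obtain ⟨⟨BN, hBN⟩, hNsup⟩ := id hN
    have hyb' : N s < (b : EReal) := hNs ▸ hyb
    have hNs_bot : N s ≠ ⊥ := fun h => by simpa [h] using hBN s
    have hNs_top : N s ≠ ⊤ := by
      intro h
      rw [h] at hyb'
      exact absurd hyb' (by simp)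
    set nr := (N s).toReal with hnr
    have hNsr : N s = (nr : EReal) := (EReal.coe_toReal hNs_top hNs_bot).symm
    have hnrb : nr < b := by
      rw [hNsr] at hyb'
      exact_mod_cast hyb'
    set ε : ℝ := b - nr with hεd
    have hε : 0 < ε := by simp only [hεd]; linarith
    have hMxex : ∀ x : X, ∃ Mx : List X → EReal, IsSupermartingale Q Mx ∧
        (∀ ω ∈ cyl (s ++ [x]), f ω ≤ Filter.liminf (fun n => Mx (seg ω n)) Filter.atTop) ∧
        Mx (s ++ [x]) ≤ N (s ++ [x]) + (ε : EReal) := by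
      intro x
      by_cases htop : N (s ++ [x]) = ⊤
      · refine ⟨fun _ => ⊤, ⟨⟨0, fun _ => le_top⟩, fun _ => le_top⟩, ?_, ?_⟩
        · intro ω _
          exact le_of_le_of_eq le_top (Filter.liminf_const (⊤ : EReal)).symm
        · rw [htop, EReal.top_add_of_ne_bot (by simp)]
      · have hNt_bot : N (s ++ [x]) ≠ ⊥ := fun h => by simpa [h] using hBN (s ++ [x])
        have key : gUE Q f (s ++ [x]) ≤ N (s ++ [x]) := by
          by_contra hk
          push_neg at hk
          obtain ⟨c, hc1, hc2⟩ := EReal.exists_between_coe_real hk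
          have hmart := mart_ge Q hQ N hN (s ++ [x]) c ?_
          · exact absurd hmart (not_le.mpr hc1)
          · intro ω hω
            have hωs : ω ∈ cyl s := cyl_succ_subset hω
            have hseg1 : seg ω (s.length + 1) = s ++ [x] := by
              have h' : seg ω (s ++ [x]).length = s ++ [x] := hω
              rwa [List.length_append, List.length_singleton] at h'
            have hgle : gUE Q f (seg ω (s.length + 1)) ≤
                Filter.liminf (fun n => N (seg ω n)) Filter.atTop := hNdom ω hωs
            rw [hseg1] at hgle
            exact le_of_lt (lt_of_lt_of_le hc2 hgle)
        have hcoe : N (s ++ [x]) = (((N (s ++ [x])).toReal : ℝ) : EReal) :=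
          (EReal.coe_toReal htop hNt_bot).symm
        have hlt2 : gUE Q f (s ++ [x]) < N (s ++ [x]) + (ε : EReal) := by
          refine lt_of_le_of_lt key ?_
          rw [hcoe, ← EReal.coe_add]
          exact_mod_cast (by linarith : (N (s ++ [x])).toReal < (N (s ++ [x])).toReal + ε)
        obtain ⟨y', ⟨Mx, hMx1, hMx2, hMxy⟩, hy'lt⟩ := sInf_lt_iff.mp hlt2
        exact ⟨Mx, hMx1, hMx2, le_of_lt (hMxy ▸ hy'lt)⟩
    choose Mx hMxsup hMxdom hMxle using hMxex
    have hBxex : ∀ x : X, ∃ Bx : ℝ, ∀ u, (Bx : EReal) ≤ Mx x u := fun x => (hMxsup x).1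
    choose BX hBX using hBxex
    set d : X := Classical.arbitrary X with hd
    set M : List X → EReal := fun u =>
      if s.length < u.length ∧ s <+: u then Mx (u.getD s.length d) u else N u + (ε : EReal)
      with hM
    have hMin : ∀ u, (s.length < u.length ∧ s <+: u) → M u = Mx (u.getD s.length d) u := by
      intro u hu
      simp only [hM]
      rw [if_pos hu]
    have hMout : ∀ u, ¬(s.length < u.length ∧ s <+: u) → M u = N u + (ε : EReal) := by
      intro u hu
      simp only [hM]
      rw [if_neg hu]
    have hMs : M s = (b : EReal) := by
      rw [hMout s (by simp), hNsr, ← EReal.coe_add]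
      exact_mod_cast congrArg (fun z : ℝ => (z : EReal)) (by rw [hεd]; ring)
    have hQN : ∀ u, Q u (fun y => N (u ++ [y]) + (ε : EReal)) ≤ N u + (ε : EReal) := by
      intro u
      calc Q u (fun y => N (u ++ [y]) + (ε : EReal))
          ≤ Q u (fun y => N (u ++ [y])) + Q u (fun _ => (ε : EReal)) :=
            (hQ u).subadd _ _ ⟨BN, fun y => hBN _⟩ ⟨ε, fun _ => le_rfl⟩
        _ = Q u (fun y => N (u ++ [y])) + (ε : EReal) := by rw [(hQ u).const]
        _ ≤ N u + (ε : EReal) := add_le_add (hNsup u) le_rfl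
    have hMsuper : IsSupermartingale Q M := by
      constructor
      · refine ⟨min BN (Finset.univ.inf' Finset.univ_nonempty BX), fun u => ?_⟩
        by_cases hu : s.length < u.length ∧ s <+: u
        · rw [hMin u hu]
          refine le_trans ?_ (hBX _ u)
          exact_mod_cast (min_le_right _ _).trans (Finset.inf'_le _ (Finset.mem_univ _))
        · rw [hMout u hu]
          refine le_trans ?_ (le_trans (hBN u)
            (le_add_of_nonneg_right (by exact_mod_cast le_of_lt hε)))
          exact_mod_cast min_le_left _ _
      · intro u
        by_cases hu : s.length < u.length ∧ s <+: u
        · have hy : ∀ y : X, M (u ++ [y]) = Mx (u.getD s.length d) (u ++ [y]) := by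
            intro y
            rw [hMin (u ++ [y]) ⟨by simp only [List.length_append, List.length_singleton]; omega,
              hu.2.trans (List.prefix_append _ _)⟩, getD_append_lt u [y] s.length hu.1 d]
          have heq : (fun y => M (u ++ [y])) = fun y => Mx (u.getD s.length d) (u ++ [y]) :=
            funext hy
          rw [heq, hMin u hu]
          exact (hMxsup _).2 u
        · by_cases hus : u = s
          · subst hus
            have hy : ∀ y : X, M (u ++ [y]) = Mx y (u ++ [y]) := by
              intro y
              rw [hMin (u ++ [y]) ⟨by simp, List.prefix_append _ _⟩, getD_concat_length]
            have heq : (fun y => M (u ++ [y])) = fun y => Mx y (u ++ [y]) := funext hy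
            rw [heq, hMout u (by simp)]
            calc Q u (fun y => Mx y (u ++ [y]))
                ≤ Q u (fun y => N (u ++ [y]) + (ε : EReal)) := by
                  refine (hQ u).mono _ _
                    ⟨Finset.univ.inf' Finset.univ_nonempty BX, fun y => le_trans
                      (by exact_mod_cast Finset.inf'_le _ (Finset.mem_univ y)) (hBX y _)⟩
                    ⟨BN, fun y => le_trans (hBN _)
                      (le_add_of_nonneg_right (by exact_mod_cast le_of_lt hε))⟩
                    (fun y => hMxle y)
              _ ≤ N u + (ε : EReal) := hQN u
          · have hy : ∀ y : X, M (u ++ [y]) = N (u ++ [y]) + (ε : EReal) := by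
              intro y
              refine hMout (u ++ [y]) ?_
              rintro ⟨hl, hp⟩
              rcases lt_or_ge u.length s.length with h | h
              · simp only [List.length_append, List.length_singleton] at hl
                omega
              · have hps : s <+: u :=
                  List.prefix_of_prefix_length_le hp (List.prefix_append _ _) h
                rcases Nat.lt_or_ge s.length u.length with h' | h'
                · exact hu ⟨h', hps⟩
                · exact hus ((hps.eq_of_length (le_antisymm h h')).symm)
            have heq : (fun y => M (u ++ [y])) = fun y => N (u ++ [y]) + (ε : EReal) := funext hy
            rw [heq, hMout u hu]
            exact hQN u
    have hMdom : ∀ ω ∈ cyl s, f ω ≤ Filter.liminf (fun n => M (seg ω n)) Filter.atTop := by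
      intro ω hω
      have hωeq : seg ω s.length = s := hω
      have hev : ∀ᶠ n in Filter.atTop, M (seg ω n) = Mx (ω s.length) (seg ω n) := by
        filter_upwards [eventually_ge_atTop (s.length + 1)] with n hn
        have hreg : s.length < (seg ω n).length ∧ s <+: seg ω n := by
          constructor
          · rw [seg_length]; omega
          · rw [show s = seg ω s.length from hωeq.symm]
            exact seg_prefix ω (by omega)
        rw [hMin _ hreg, seg_getD ω (by omega) d]
      rw [Filter.liminf_congr hev]
      refine hMxdom (ω s.length) ω ?_
      show seg ω (s ++ [ω s.length]).length = s ++ [ω s.length]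
      have hlen : (s ++ [ω s.length]).length = s.length + 1 := by simp
      rw [hlen]
      exact seg_of_mem_cyl hω
    have hle : gUE Q f s ≤ (b : EReal) := sInf_le ⟨M, hMsuper, hMdom, hMs⟩
    exact absurd hb2 (not_lt.mpr hle)
  · -- `gUE Q g s ≤ gUE Q f s`
    apply le_sInf
    rintro y ⟨M, hM, hMdom, rfl⟩
    obtain ⟨⟨B, hB⟩, hMsup⟩ := id hM
    set M' : List X → EReal := fun u => M (u.take (s.length + 1)) with hM'
    have hM'def : ∀ u, M' u = M (u.take (s.length + 1)) := fun u => rfl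
    have hM'super : IsSupermartingale Q M' := by
      refine ⟨⟨B, fun u => hB _⟩, ?_⟩
      intro u
      by_cases hu : u.length ≤ s.length
      · have h1 : ∀ y : X, M' (u ++ [y]) = M (u ++ [y]) := by
          intro y
          rw [hM'def, List.take_of_length_le
            (by simp only [List.length_append, List.length_singleton]; omega)]
        have h2 : M' u = M u := by
          rw [hM'def, List.take_of_length_le (by omega)]
        calc Q u (fun y => M' (u ++ [y])) = Q u (fun y => M (u ++ [y])) := by
              simp only [h1]
          _ ≤ M u := hMsup u
          _ = M' u := h2.symm
      · push_neg at hu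
        have h1 : ∀ y : X, M' (u ++ [y]) = M' u := by
          intro y
          rw [hM'def, hM'def, List.take_append_of_le_length (by omega)]
        have heq : (fun y => M' (u ++ [y])) = fun _ => M' u := funext h1
        rw [heq]
        by_cases htop : M' u = ⊤
        · rw [htop]; exact le_top
        · have hbot : M' u ≠ ⊥ := by
            intro h
            rw [hM'def] at h
            simpa [h] using hB (u.take (s.length + 1))
          have hrepr : M' u = (((M' u).toReal : ℝ) : EReal) := (EReal.coe_toReal htop hbot).symm
          refine le_of_eq ?_
          rw [hrepr]
          exact (hQ u).const _
    have hM'dom : ∀ ω ∈ cyl s, gUE Q f (seg ω (s.length + 1)) ≤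
        Filter.liminf (fun n => M' (seg ω n)) Filter.atTop := by
      intro ω hω
      have hωeq : seg ω s.length = s := hω
      have hev : ∀ᶠ n in Filter.atTop, M' (seg ω n) = M (seg ω (s.length + 1)) := by
        filter_upwards [eventually_ge_atTop (s.length + 1)] with n hn
        rw [hM'def, seg_take ω hn]
      rw [Filter.liminf_congr hev, Filter.liminf_const]
      refine sInf_le ⟨M, hM, ?_, rfl⟩
      intro ω' hω'
      refine hMdom ω' ?_
      show seg ω' s.length = s
      have hl : (seg ω (s.length + 1)).length = s.length + 1 := seg_length ω _
      have hω'' : seg ω' (s.length + 1) = seg ω (s.length + 1) := by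
        have h' : seg ω' (seg ω (s.length + 1)).length = seg ω (s.length + 1) := hω'
        rwa [hl] at h'
      calc seg ω' s.length = (seg ω' (s.length + 1)).take s.length :=
            (seg_take ω' (Nat.le_succ _)).symm
        _ = (seg ω (s.length + 1)).take s.length := by rw [hω'']
        _ = seg ω s.length := seg_take ω (Nat.le_succ _)
        _ = s := hωeq
    have hM's : M' s = M s := by
      rw [hM'def, List.take_of_length_le (Nat.le_succ _)]
    calc gUE Q (fun ω => gUE Q f (seg ω (s.length + 1))) s ≤ M' s :=
          sInf_le ⟨M', hM'super, hM'dom, rfl⟩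
      _ = M s := hM's
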